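/- Let (A, ⟨⟨-,-⟩⟩) be a double quasi-Poisson algebra over A₀. Then the flipped operation ⟨⟨a,b⟩⟩_op := ⟨⟨a,b⟩⟩^∘ is an A₀-linear double quasi-Poisson bracket on the opposite algebra A^op. Moreover, if Φ ∈ A^× is a (multiplicative) moment map for (A, ⟨⟨-,-⟩⟩), then Φ⁻¹ is a moment map for (A^op, ⟨⟨-,-⟩⟩_op). -/

import Mathlib

open TensorProduct

noncomputable section

namespace Stmt1

variable {A : Type*} [Ring A] [Algebra ℂ A]

/-- The flip `(c ⊗ d)^∘ = d ⊗ c` on `A ⊗[ℂ] A`. -/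
def flipT : A ⊗[ℂ] A →ₗ[ℂ] A ⊗[ℂ] A := (TensorProduct.comm ℂ A A).toLinearMap

/-- The outer bimodule structure `a ⬝ (d' ⊗ d'') ⬝ b = (a d') ⊗ (d'' b)`. -/
def outerAct (a b : A) : A ⊗[ℂ] A →ₗ[ℂ] A ⊗[ℂ] A :=
  TensorProduct.map (LinearMap.mulLeft ℂ a) (LinearMap.mulRight ℂ b)

/-- The inner bimodule structure `a ∗ (d' ⊗ d'') ∗ b = (d' b) ⊗ (a d'')`. -/
def innerAct (a b : A) : A ⊗[ℂ] A →ₗ[ℂ] A ⊗[ℂ] A :=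
  TensorProduct.map (LinearMap.mulRight ℂ b) (LinearMap.mulLeft ℂ a)

/-- Axioms of a double bracket on `A`. -/
structure IsDoubleBracket (br : A →ₗ[ℂ] A →ₗ[ℂ] A ⊗[ℂ] A) : Prop where
  cyclic : ∀ a b : A, br a b = - flipT (br b a)
  right_der : ∀ a b c : A, br a (b * c) = outerAct 1 c (br a b) + outerAct b 1 (br a c)
  left_der : ∀ a b c : A, br (b * c) a = innerAct 1 c (br b a) + innerAct b 1 (br c a)

/-- `τ₍₁₂₃₎ : (a₁ ⊗ a₂) ⊗ a₃ ↦ (a₃ ⊗ a₁) ⊗ a₂`. -/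
def cyc3 : (A ⊗[ℂ] A) ⊗[ℂ] A →ₗ[ℂ] (A ⊗[ℂ] A) ⊗[ℂ] A :=
  ((TensorProduct.comm ℂ (A ⊗[ℂ] A) A).trans (TensorProduct.assoc ℂ A A A).symm).toLinearMap

/-- The left extension of a double bracket. -/
def brL (br : A →ₗ[ℂ] A →ₗ[ℂ] A ⊗[ℂ] A) (a : A) :
    A ⊗[ℂ] A →ₗ[ℂ] (A ⊗[ℂ] A) ⊗[ℂ] A :=
  TensorProduct.map (br a) LinearMap.id

/-- The double Jacobiator of a double bracket. -/
def tripleBr (br : A →ₗ[ℂ] A →ₗ[ℂ] A ⊗[ℂ] A) (a b c : A) : (A ⊗[ℂ] A) ⊗[ℂ] A :=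
  brL br a (br b c) + cyc3 (brL br b (br c a)) + cyc3 (cyc3 (brL br c (br a b)))

variable {I : Type*} [Fintype I] [DecidableEq I]

/-- `(e s)` is a complete family of orthogonal idempotents. -/
def IsCompleteOrthIdem (e : I → A) : Prop :=
  (∀ s t : I, e s * e t = if s = t then e s else 0) ∧ (∑ s, e s = 1)

/-- `A₀`-linearity of a double bracket. -/
def IsA0Linear (br : A →ₗ[ℂ] A →ₗ[ℂ] A ⊗[ℂ] A) (e : I → A) : Prop :=
  ∀ (s : I) (a : A), br (e s) a = 0 ∧ br a (e s) = 0

/-- The right-hand side of the quasi-Poisson property of the double Jacobiator. -/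
def qpRhs (e : I → A) (a b c : A) : (A ⊗[ℂ] A) ⊗[ℂ] A :=
  (4 : ℂ)⁻¹ • ∑ s, (
    ((c * e s * a) ⊗ₜ[ℂ] (e s * b)) ⊗ₜ[ℂ] e s
    - ((c * e s * a) ⊗ₜ[ℂ] e s) ⊗ₜ[ℂ] (b * e s)
    - ((c * e s) ⊗ₜ[ℂ] (a * e s * b)) ⊗ₜ[ℂ] e s
    + ((c * e s) ⊗ₜ[ℂ] (a * e s)) ⊗ₜ[ℂ] (b * e s)
    - ((e s * a) ⊗ₜ[ℂ] (e s * b)) ⊗ₜ[ℂ] (e s * c)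
    + ((e s * a) ⊗ₜ[ℂ] e s) ⊗ₜ[ℂ] (b * e s * c)
    + (e s ⊗ₜ[ℂ] (a * e s * b)) ⊗ₜ[ℂ] (e s * c)
    - (e s ⊗ₜ[ℂ] (a * e s)) ⊗ₜ[ℂ] (b * e s * c))

/-- The double bracket is quasi-Poisson. -/
def IsQuasiPoisson (br : A →ₗ[ℂ] A →ₗ[ℂ] A ⊗[ℂ] A) (e : I → A) : Prop :=
  ∀ a b c : A, tripleBr br a b c = qpRhs e a b c

/-- `Φ` is a (multiplicative) moment map for the double quasi-Poisson bracket. -/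
def IsQuasiMomentMap (br : A →ₗ[ℂ] A →ₗ[ℂ] A ⊗[ℂ] A) (e : I → A) (Φ : A) : Prop :=
  IsUnit Φ ∧ (Φ = ∑ s, e s * Φ * e s) ∧
  ∀ (s : I) (a : A),
    br (e s * Φ * e s) a = (2 : ℂ)⁻¹ • (
      (a * e s) ⊗ₜ[ℂ] (e s * Φ * e s) - e s ⊗ₜ[ℂ] (e s * Φ * e s * a)
      + (a * (e s * Φ * e s)) ⊗ₜ[ℂ] e s - (e s * Φ * e s) ⊗ₜ[ℂ] (e s * a))

/-- The flipped double bracket `⟨⟨a,b⟩⟩_op := ⟨⟨a,b⟩⟩^∘` on the opposite algebra. -/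
def opBr (br : A →ₗ[ℂ] A →ₗ[ℂ] A ⊗[ℂ] A) :
    Aᵐᵒᵖ →ₗ[ℂ] Aᵐᵒᵖ →ₗ[ℂ] Aᵐᵒᵖ ⊗[ℂ] Aᵐᵒᵖ :=
  (br.compl₁₂ (MulOpposite.opLinearEquiv ℂ).symm.toLinearMap
      (MulOpposite.opLinearEquiv ℂ).symm.toLinearMap).compr₂
    ((TensorProduct.map (MulOpposite.opLinearEquiv ℂ).toLinearMap
        (MulOpposite.opLinearEquiv ℂ).toLinearMap).comp
      (TensorProduct.comm ℂ A A).toLinearMap)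

/-!
Pass between `A` and `Aᵐᵒᵖ` by the map `x ⊗ y ↦ op y ⊗ op x`. It exchanges the outer and inner
bimodule structures with their opposite versions and commutes with the flip, so the double-bracket
axioms transfer directly. On triple tensors, the double Jacobiator of `⟨⟨-,-⟩⟩_op` at `(a, b, c)` is
`-τ₍₁₂₃₎` applied to the reversal `x ⊗ y ⊗ z ↦ op z ⊗ op y ⊗ op x` of the double Jacobiator of
`⟨⟨-,-⟩⟩` at `(c, b, a)`, and the quasi-Poisson right-hand side transforms in exactly the same way.

For the moment map, `Φ = Σ e_s Φ e_s` means that `Φ`, hence `Ψ = Φ⁻¹`, commutes with every `e_s`.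
Differentiating `Φ Ψ = 1` gives `⟨⟨Ψ, a⟩⟩ = -Ψ ∗ ⟨⟨Φ, a⟩⟩ ∗ Ψ`; cutting down by `e_s` on both
sides turns the moment-map identity for `Φ_s` into a formula for `⟨⟨Ψ_s, a⟩⟩`, and its flip is the
moment-map identity for `op Ψ` in `Aᵐᵒᵖ`.
-/

open MulOpposite

section Tensor

@[simp] lemma outerAct_tmul (a b x y : A) :
    outerAct a b (x ⊗ₜ[ℂ] y) = (a * x) ⊗ₜ[ℂ] (y * b) := rfl

@[simp] lemma innerAct_tmul (a b x y : A) :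
    innerAct a b (x ⊗ₜ[ℂ] y) = (x * b) ⊗ₜ[ℂ] (a * y) := rfl

@[simp] lemma cyc3_tmul (x y z : A) :
    cyc3 ((x ⊗ₜ[ℂ] y) ⊗ₜ[ℂ] z) = (z ⊗ₜ[ℂ] x) ⊗ₜ[ℂ] y := rfl

lemma innerAct_innerAct (a b c d : A) (ω : A ⊗[ℂ] A) :
    innerAct a b (innerAct c d ω) = innerAct (a * c) (d * b) ω := by
  induction ω using TensorProduct.induction_on with
  | zero => simp
  | tmul x y => simp [mul_assoc]
  | add ω₁ ω₂ h₁ h₂ => simp [h₁, h₂]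

lemma innerAct_one_one (ω : A ⊗[ℂ] A) : innerAct 1 1 ω = ω := by
  simp [innerAct, TensorProduct.map_id]

end Tensor

section Opposite

def opFlip : A ⊗[ℂ] A →ₗ[ℂ] Aᵐᵒᵖ ⊗[ℂ] Aᵐᵒᵖ :=
  (TensorProduct.map (opLinearEquiv ℂ).toLinearMap (opLinearEquiv ℂ).toLinearMap).comp
    (TensorProduct.comm ℂ A A).toLinearMap

@[simp] lemma opFlip_tmul (x y : A) : opFlip (x ⊗ₜ[ℂ] y) = op y ⊗ₜ[ℂ] op x := rfl

lemma opBr_op_op (br : A →ₗ[ℂ] A →ₗ[ℂ] A ⊗[ℂ] A) (a b : A) :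
    opBr br (op a) (op b) = opFlip (br a b) := rfl

lemma opFlip_flipT (ω : A ⊗[ℂ] A) : opFlip (flipT ω) = flipT (opFlip ω) :=
  LinearMap.congr_fun (f := opFlip ∘ₗ flipT) (g := flipT ∘ₗ opFlip)
    (TensorProduct.ext' fun _ _ => rfl) ω

lemma opFlip_outerAct (a b : A) (ω : A ⊗[ℂ] A) :
    opFlip (outerAct a b ω) = outerAct (op b) (op a) (opFlip ω) :=
  LinearMap.congr_fun (f := opFlip ∘ₗ outerAct a b) (g := outerAct (op b) (op a) ∘ₗ opFlip)
    (TensorProduct.ext' fun _ _ => by simp) ω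

lemma opFlip_innerAct (a b : A) (ω : A ⊗[ℂ] A) :
    opFlip (innerAct a b ω) = innerAct (op b) (op a) (opFlip ω) :=
  LinearMap.congr_fun (f := opFlip ∘ₗ innerAct a b) (g := innerAct (op b) (op a) ∘ₗ opFlip)
    (TensorProduct.ext' fun _ _ => by simp) ω

def opFlipLeft : (A ⊗[ℂ] A) ⊗[ℂ] A →ₗ[ℂ] (Aᵐᵒᵖ ⊗[ℂ] Aᵐᵒᵖ) ⊗[ℂ] Aᵐᵒᵖ :=
  TensorProduct.map opFlip (opLinearEquiv ℂ).toLinearMap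

def opRev : (A ⊗[ℂ] A) ⊗[ℂ] A →ₗ[ℂ] (Aᵐᵒᵖ ⊗[ℂ] Aᵐᵒᵖ) ⊗[ℂ] Aᵐᵒᵖ :=
  (TensorProduct.assoc ℂ Aᵐᵒᵖ Aᵐᵒᵖ Aᵐᵒᵖ).symm.toLinearMap ∘ₗ
    TensorProduct.map (opLinearEquiv ℂ).toLinearMap opFlip ∘ₗ
    (TensorProduct.comm ℂ (A ⊗[ℂ] A) A).toLinearMap

@[simp] lemma opRev_tmul (x y z : A) :
    opRev ((x ⊗ₜ[ℂ] y) ⊗ₜ[ℂ] z) = (op z ⊗ₜ[ℂ] op y) ⊗ₜ[ℂ] op x := rfl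

lemma brL_opBr_opFlip (br : A →ₗ[ℂ] A →ₗ[ℂ] A ⊗[ℂ] A) (a : A) (ω : A ⊗[ℂ] A) :
    brL (opBr br) (op a) (opFlip ω) = opFlipLeft (brL br a (flipT ω)) :=
  LinearMap.congr_fun (f := brL (opBr br) (op a) ∘ₗ opFlip)
    (g := opFlipLeft ∘ₗ brL br a ∘ₗ flipT)
    (TensorProduct.ext' fun _ _ => rfl) ω

lemma cyc3_opRev (t : (A ⊗[ℂ] A) ⊗[ℂ] A) : cyc3 (opRev t) = cyc3 (cyc3 (opFlipLeft t)) :=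
  LinearMap.congr_fun (f := cyc3 ∘ₗ opRev) (g := cyc3 ∘ₗ cyc3 ∘ₗ opFlipLeft)
    (TensorProduct.ext_threefold fun _ _ _ => rfl) t

lemma cyc3_opRev_cyc3 (t : (A ⊗[ℂ] A) ⊗[ℂ] A) : cyc3 (opRev (cyc3 t)) = cyc3 (opFlipLeft t) :=
  LinearMap.congr_fun (f := cyc3 ∘ₗ opRev ∘ₗ cyc3) (g := cyc3 ∘ₗ opFlipLeft)
    (TensorProduct.ext_threefold fun _ _ _ => rfl) t

lemma cyc3_opRev_cyc3_cyc3 (t : (A ⊗[ℂ] A) ⊗[ℂ] A) :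
    cyc3 (opRev (cyc3 (cyc3 t))) = opFlipLeft t :=
  LinearMap.congr_fun (f := cyc3 ∘ₗ opRev ∘ₗ cyc3 ∘ₗ cyc3) (g := opFlipLeft)
    (TensorProduct.ext_threefold fun _ _ _ => rfl) t

lemma tripleBr_opBr {br : A →ₗ[ℂ] A →ₗ[ℂ] A ⊗[ℂ] A} (hbr : IsDoubleBracket br) (a b c : A) :
    tripleBr (opBr br) (op a) (op b) (op c) = -cyc3 (opRev (tripleBr br c b a)) := by
  have flip_br (x y : A) : flipT (br x y) = -br y x := by rw [hbr.cyclic y x, neg_neg]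
  rw [tripleBr, tripleBr, opBr_op_op, opBr_op_op, opBr_op_op, brL_opBr_opFlip, brL_opBr_opFlip,
    brL_opBr_opFlip, flip_br, flip_br, flip_br, map_add, map_add, map_add, map_add,
    cyc3_opRev_cyc3_cyc3, cyc3_opRev_cyc3, cyc3_opRev]
  simp only [map_neg]
  abel

end Opposite

namespace IsDoubleBracket

variable {br : A →ₗ[ℂ] A →ₗ[ℂ] A ⊗[ℂ] A}

lemma op (hbr : IsDoubleBracket br) : IsDoubleBracket (opBr br) where
  cyclic α β := by
    rw [← op_unop α, ← op_unop β, opBr_op_op, opBr_op_op, hbr.cyclic, map_neg, opFlip_flipT]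
  right_der α β γ := by
    rw [← op_unop α, ← op_unop β, ← op_unop γ, ← op_mul, opBr_op_op, opBr_op_op, opBr_op_op,
      hbr.right_der, map_add, opFlip_outerAct, opFlip_outerAct, op_one, add_comm]
  left_der α β γ := by
    rw [← op_unop α, ← op_unop β, ← op_unop γ, ← op_mul, opBr_op_op, opBr_op_op, opBr_op_op,
      hbr.left_der, map_add, opFlip_innerAct, opFlip_innerAct, op_one, add_comm]

lemma one_left (hbr : IsDoubleBracket br) (a : A) : br 1 a = 0 := by
  have h := hbr.left_der a 1 1
  rwa [one_mul, innerAct_one_one, left_eq_add] at h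

lemma inverse_left (hbr : IsDoubleBracket br) {Φ : A} (hΦ : IsUnit Φ) (a : A) :
    br (Ring.inverse Φ) a = -innerAct (Ring.inverse Φ) (Ring.inverse Φ) (br Φ a) := by
  set Ψ := Ring.inverse Φ
  have h := congrArg (innerAct Ψ 1) (hbr.left_der a Φ Ψ)
  rw [Ring.mul_inverse_cancel Φ hΦ, hbr.one_left, map_zero, map_add, innerAct_innerAct,
    innerAct_innerAct, Ring.inverse_mul_cancel Φ hΦ, mul_one, one_mul, innerAct_one_one] at h
  exact eq_neg_of_add_eq_zero_right h.symm

lemma corner_left (hbr : IsDoubleBracket br) {e : A} (he : ∀ a, br e a = 0) (x a : A) :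
    br (e * x * e) a = innerAct e e (br x a) := by
  rw [hbr.left_der, he, map_zero, add_zero, hbr.left_der, he, map_zero, zero_add,
    innerAct_innerAct, one_mul]

end IsDoubleBracket

section Idempotents

variable {R ι : Type*} [Ring R] [Fintype ι] [DecidableEq ι] {e : ι → R}

lemma IsCompleteOrthIdem.op (he : IsCompleteOrthIdem e) :
    IsCompleteOrthIdem fun s => MulOpposite.op (e s) := by
  refine ⟨fun s t => ?_, by rw [← Finset.op_sum, he.2, op_one]⟩
  rw [← op_mul, he.1 t s]
  split_ifs with h₁ h₂ h₂ <;> simp_all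

lemma IsCompleteOrthIdem.sum_corners_mul (he : IsCompleteOrthIdem e) (x : R) (s : ι) :
    (∑ t, e t * x * e t) * e s = e s * x * e s := by
  rw [Finset.sum_mul, Finset.sum_eq_single s (fun t _ hts => by rw [mul_assoc, he.1, if_neg hts,
    mul_zero]) (by simp), mul_assoc, he.1, if_pos rfl]

lemma IsCompleteOrthIdem.mul_sum_corners (he : IsCompleteOrthIdem e) (x : R) (s : ι) :
    e s * (∑ t, e t * x * e t) = e s * x * e s := by
  rw [Finset.mul_sum, Finset.sum_eq_single s (fun t _ hts => by
    rw [← mul_assoc, ← mul_assoc, he.1, if_neg (Ne.symm hts), zero_mul, zero_mul]) (by simp),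
    ← mul_assoc, ← mul_assoc, he.1, if_pos rfl]

lemma IsCompleteOrthIdem.commute_of_eq_sum (he : IsCompleteOrthIdem e) {x : R}
    (hx : x = ∑ t, e t * x * e t) (s : ι) : Commute x (e s) := by
  calc x * e s = e s * x * e s := by rw [← he.sum_corners_mul, ← hx]
    _ = e s * x := by rw [← he.mul_sum_corners, ← hx]

lemma IsCompleteOrthIdem.eq_sum_of_commute (he : IsCompleteOrthIdem e) {x : R}
    (hx : ∀ s, Commute x (e s)) : x = ∑ t, e t * x * e t := by
  calc x = ∑ t, x * e t := by rw [← Finset.mul_sum, he.2, mul_one]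
    _ = ∑ t, e t * x * e t := Finset.sum_congr rfl fun t _ => by
      rw [← (hx t).eq, mul_assoc, he.1, if_pos rfl]

end Idempotents

lemma _root_.Commute.ringInverse_left {M₀ : Type*} [MonoidWithZero M₀] {a b : M₀} (ha : IsUnit a)
    (h : Commute a b) : Commute (Ring.inverse a) b := by
  obtain ⟨u, rfl⟩ := ha
  rw [Ring.inverse_unit]
  exact h.units_inv_left

section QuasiPoisson

variable {ι : Type*} {br : A →ₗ[ℂ] A →ₗ[ℂ] A ⊗[ℂ] A} {e : ι → A}

lemma IsA0Linear.op (hlin : IsA0Linear br e) :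
    IsA0Linear (opBr br) fun s => MulOpposite.op (e s) := fun s α => by
  rw [← op_unop α, opBr_op_op, opBr_op_op, (hlin s _).1, (hlin s _).2, map_zero]
  exact ⟨rfl, rfl⟩

lemma qpRhs_op [Fintype ι] (a b c : A) :
    qpRhs (fun s => op (e s)) (op a) (op b) (op c) = -cyc3 (opRev (qpRhs e c b a)) := by
  rw [eq_neg_iff_add_eq_zero]
  simp only [qpRhs, map_smul, map_sum, ← smul_add, ← Finset.sum_add_distrib]
  refine smul_eq_zero_of_right _ (Finset.sum_eq_zero fun s _ => ?_)
  simp only [map_add, map_sub, opRev_tmul, cyc3_tmul, ← op_mul, mul_assoc]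
  abel

lemma IsQuasiPoisson.op [Fintype ι] [DecidableEq ι] (hbr : IsDoubleBracket br)
    (hqP : IsQuasiPoisson br e) : IsQuasiPoisson (opBr br) fun s => MulOpposite.op (e s) :=
  fun α β γ => by
    rw [← op_unop α, ← op_unop β, ← op_unop γ, tripleBr_opBr hbr, hqP, qpRhs_op]

end QuasiPoisson

section MomentMap

variable {br : A →ₗ[ℂ] A →ₗ[ℂ] A ⊗[ℂ] A} {e : I → A} {Φ : A}

lemma IsQuasiMomentMap.commute (he : IsCompleteOrthIdem e) (hΦ : IsQuasiMomentMap br e Φ)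
    (s : I) : Commute Φ (e s) :=
  he.commute_of_eq_sum hΦ.2.1 s

lemma IsQuasiMomentMap.bracket_inverse_corner (he : IsCompleteOrthIdem e)
    (hbr : IsDoubleBracket br) (hlin : IsA0Linear br e) (hΦ : IsQuasiMomentMap br e Φ)
    (s : I) (a : A) :
    br (e s * Ring.inverse Φ * e s) a = (2 : ℂ)⁻¹ • (
      (e s * Ring.inverse Φ * e s) ⊗ₜ[ℂ] (e s * a) + e s ⊗ₜ[ℂ] (e s * Ring.inverse Φ * e s * a)
      - (a * (e s * Ring.inverse Φ * e s)) ⊗ₜ[ℂ] e s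
      - (a * e s) ⊗ₜ[ℂ] (e s * Ring.inverse Φ * e s)) := by
  have hu := hΦ.1
  have hΦe := hΦ.commute he s
  have hΨe := hΦe.ringInverse_left hu
  have hcorner := hbr.corner_left fun a => (hlin s a).1
  have h_idem (x : A) : e s * (e s * x) = e s * x := by
    rw [← mul_assoc, he.1, if_pos rfl]
  have hbrΨ : br (e s * Ring.inverse Φ * e s) a =
      -innerAct (Ring.inverse Φ) (Ring.inverse Φ) (br (e s * Φ * e s) a) := by
    rw [hcorner, hbr.inverse_left hu, map_neg, innerAct_innerAct, hcorner, innerAct_innerAct,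
      hΨe.eq]
  rw [hbrΨ, hΦ.2.2]
  simp only [map_smul, map_add, map_sub, innerAct_tmul, mul_assoc, hΨe.eq, hΦe.eq, hΨe.left_comm,
    h_idem, Ring.mul_inverse_cancel Φ hu, Ring.inverse_mul_cancel Φ hu,
    Ring.inverse_mul_cancel_left Φ _ hu, mul_one]
  module

lemma IsQuasiMomentMap.op_inverse (he : IsCompleteOrthIdem e) (hbr : IsDoubleBracket br)
    (hlin : IsA0Linear br e) (hΦ : IsQuasiMomentMap br e Φ) :
    IsQuasiMomentMap (opBr br) (fun s => op (e s)) (op (Ring.inverse Φ)) := by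
  have hΨe (s : I) := (hΦ.commute he s).ringInverse_left hΦ.1
  refine ⟨(isUnit_ringInverse.mpr hΦ.1).op, he.op.eq_sum_of_commute fun s => (hΨe s).op,
    fun s α => ?_⟩
  have h_corner : op (e s) * op (Ring.inverse Φ) * op (e s) = op (e s * Ring.inverse Φ * e s) := by
    simp only [← op_mul, mul_assoc]
  rw [h_corner, ← op_unop α, opBr_op_op, hΦ.bracket_inverse_corner he hbr hlin]
  simp only [map_smul, map_add, map_sub, opFlip_tmul, ← op_mul, mul_assoc]
  module

end MomentMap

/-- If `(A, ⟨⟨-,-⟩⟩)` is a double quasi-Poisson algebra over `A₀`,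
then the flipped operation `⟨⟨-,-⟩⟩_op` is an `A₀`-linear double quasi-Poisson bracket
on `A^op`; moreover if `Φ ∈ A^×` is a moment map for `(A, ⟨⟨-,-⟩⟩)` then `Φ⁻¹` is a
moment map for `(A^op, ⟨⟨-,-⟩⟩_op)`. -/
theorem double_quasiPoisson_opposite
    (e : I → A) (he : IsCompleteOrthIdem e)
    (br : A →ₗ[ℂ] A →ₗ[ℂ] A ⊗[ℂ] A)
    (hbr : IsDoubleBracket br) (hlin : IsA0Linear br e) (hqP : IsQuasiPoisson br e)
    (Φ : A) (hΦ : IsQuasiMomentMap br e Φ) :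
    IsDoubleBracket (opBr br) ∧
    IsA0Linear (opBr br) (fun s => MulOpposite.op (e s)) ∧
    IsQuasiPoisson (opBr br) (fun s => MulOpposite.op (e s)) ∧
    IsQuasiMomentMap (opBr br) (fun s => MulOpposite.op (e s))
      (MulOpposite.op (Ring.inverse Φ)) :=
  ⟨hbr.op, hlin.op, hqP.op hbr, hΦ.op_inverse he hbr hlin⟩

end Stmt1
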